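/- Let h : ℝ → ℝ be strictly convex on ℝ with h(0) = 0, let n be a positive integer, and let t : Fin n → ℝ be strictly increasing (t_i < t_j for i < j). Define g_{ij} := h(t_j − t_i) for i < j. Then for all indices i < j ≤ k < l one has g_{il} + g_{jk} > g_{ik} + g_{jl}, where g_{jj} is interpreted as 0; in particular g_{il} > g_{ik} + g_{kl} for all i < k < l. -/

import Mathlib

lemma monge_key (h : ℝ → ℝ) (hconv : StrictConvexOn ℝ Set.univ h)
    {a b x : ℝ} (hax : a < x) (hxb : x < b) :
    h x + h (a + b - x) < h a + h b := by
  have hab : a < b := hax.trans hxb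
  have hba : (0:ℝ) < b - a := by linarith
  set l := (b - x)/(b - a) with hl
  set m := (x - a)/(b - a) with hm
  have hl0 : 0 < l := div_pos (by linarith) hba
  have hm0 : 0 < m := div_pos (by linarith) hba
  have hlm : l + m = 1 := by rw [hl, hm]; field_simp; ring
  have h1 : h (l • a + m • b) < l • h a + m • h b :=
    hconv.2 (Set.mem_univ a) (Set.mem_univ b) (ne_of_lt hab) hl0 hm0 hlm
  have h2 : h (m • a + l • b) < m • h a + l • h b :=
    hconv.2 (Set.mem_univ a) (Set.mem_univ b) (ne_of_lt hab) hm0 hl0 (by linarith)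
  have e1 : l • a + m • b = x := by
    simp only [smul_eq_mul, hl, hm]; field_simp; ring
  have e2 : m • a + l • b = a + b - x := by
    simp only [smul_eq_mul, hl, hm]; field_simp; ring
  rw [e1] at h1; rw [e2] at h2
  simp only [smul_eq_mul] at h1 h2
  have e : l * h a + m * h b + (m * h a + l * h b) = (l + m) * (h a + h b) := by ring
  rw [hlm, one_mul] at e
  linarith

/-- If `h` is strictly convex with `h 0 = 0` and `t` is strictly
increasing, then the parameters `g i j := h (t j - t i)` satisfy the strict
Monge-type inequalities `g i k + g j l < g i l + g j k` for `i < j ≤ k < l`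
(with the convention `g j j = 0`, which holds since `h 0 = 0`); in particular
`g i k + g k l < g i l` for `i < k < l`. -/
theorem strictly_convex_gives_monge
    (h : ℝ → ℝ) (hconv : StrictConvexOn ℝ Set.univ h) (h0 : h 0 = 0)
    (n : ℕ) (hn : 0 < n) (t : Fin n → ℝ) (ht : StrictMono t) :
    (∀ i j k l : Fin n, i < j → j ≤ k → k < l →
      h (t k - t i) + h (t l - t j) < h (t l - t i) + h (t k - t j)) ∧
    (∀ i k l : Fin n, i < k → k < l →
      h (t k - t i) + h (t l - t k) < h (t l - t i)) := by
  have main : ∀ i j k l : Fin n, i < j → j ≤ k → k < l →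
      h (t k - t i) + h (t l - t j) < h (t l - t i) + h (t k - t j) := by
    intro i j k l hij hjk hkl
    have hij' : t i < t j := ht hij
    have hjk' : t j ≤ t k := ht.monotone hjk
    have hkl' : t k < t l := ht hkl
    have key := monge_key h hconv (a := t k - t j) (b := t l - t i)
      (x := t k - t i) (by linarith) (by linarith)
    have : t k - t j + (t l - t i) - (t k - t i) = t l - t j := by ring
    rw [this] at key
    linarith
  refine ⟨main, fun i k l hik hkl => ?_⟩
  have := main i k k l hik le_rfl hkl
  simp only [sub_self, h0] at this
  linarith
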